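/- The group of all bijections f : V → V satisfying dist (f a) (f b) = dist a b for all a, b ∈ V (the isometry group of the 10-point metric space V with the metric induced from EuclideanSpace ℝ (Fin 5)) is isomorphic to Equiv.Perm (Fin 5), the symmetric group on five elements. (The symmetry group of the rectified 5-cell is 𝔖₅.) -/

import Mathlib

/-!
A vertex of `V` is the indicator vector of a 3-subset of `Fin 5`, and the squared distance of two
vertices is the size of the symmetric difference of their subsets. Permuting coordinates therefore
embeds `𝔖₅` into `symmGroup`. Conversely, the vertices `{0,1,2}`, `{0,1,3}`, `{0,2,3}` resolve `V`
(every vertex is determined by its distances to them), so an isometry is determined by their three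
images. These images are pairwise at squared distance 2 and, like the three vertices themselves,
have a fourth vertex at squared distance 2 from all of them; only `5!` ordered triples do, so
`symmGroup` has at most `5!` elements.
-/

noncomputable section

/-- The vertex set of the Euclidean rectified 5-cell: all coordinate
permutations of the point `(1,1,1,0,0)`. -/
def V : Set (EuclideanSpace ℝ (Fin 5)) :=
  {x | (∀ i, x i = 0 ∨ x i = 1) ∧ (∑ i, x i) = 3}

/-- The group of all bijections of `V` that preserve the distance induced
from `EuclideanSpace ℝ (Fin 5)`: the isometry group of the 10-point metric
space `V`. -/
def symmGroup : Subgroup (Equiv.Perm ↥V) where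
  carrier := {f | ∀ a b : ↥V, dist (f a) (f b) = dist a b}
  one_mem' := fun _ _ => rfl
  mul_mem' := by
    intro f g hf hg a b
    simpa [Equiv.Perm.mul_apply] using (hf (g a) (g b)).trans (hg a b)
  inv_mem' := by
    intro f hf a b
    have h := hf (f⁻¹ a) (f⁻¹ b)
    have hfi : ∀ x, f (f⁻¹ x) = x := fun x => (Equiv.eq_symm_apply f).mp rfl
    rw [hfi, hfi] at h
    exact h.symm

open Finset
open scoped symmDiff Nat

section IndicatorVector

variable {ι : Type*} [Fintype ι] [DecidableEq ι]

def indicatorVec (s : Finset ι) : EuclideanSpace ℝ ι :=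
  WithLp.toLp 2 fun i => if i ∈ s then 1 else 0

theorem dist_indicatorVec (s t : Finset ι) :
    dist (indicatorVec s) (indicatorVec t) = √(#(s ∆ t) : ℝ) := by
  rw [EuclideanSpace.dist_eq]
  congr 1
  have hterm : ∀ i, dist (indicatorVec s i) (indicatorVec t i) ^ 2 =
      if i ∈ s ∆ t then 1 else 0 := by
    intro i
    by_cases hs : i ∈ s <;> by_cases ht : i ∈ t <;> simp [indicatorVec, mem_symmDiff, hs, ht]
  simp only [hterm, sum_boole, filter_mem_eq_inter, univ_inter]

end IndicatorVector

theorem Equiv.Perm.eq_one_of_forall_map_eq {α : Type*} [Fintype α] [DecidableEq α] {k : ℕ}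
    (hk₀ : 0 < k) (hk : k < Fintype.card α) {σ : Equiv.Perm α}
    (h : ∀ s : Finset α, #s = k → s.map σ.toEmbedding = s) : σ = 1 := by
  ext i
  by_contra hi
  obtain ⟨s, his, hs, hsk⟩ : ∃ s, {i} ⊆ s ∧ s ⊆ univ.erase (σ i) ∧ #s = k :=
    exists_subsuperset_card_eq (by simpa [eq_comm] using hi) (by rwa [card_singleton])
      (by simpa using Nat.le_sub_one_of_lt hk)
  have hmem : σ i ∈ s.map σ.toEmbedding := mem_map_of_mem _ (his (mem_singleton_self i))
  rw [h s hsk] at hmem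
  simpa using hs hmem

section Resolving

variable {X : Type*} [Dist X]

def IsResolving (T : Set X) : Prop :=
  ∀ x y, (∀ t ∈ T, dist x t = dist y t) → x = y

theorem IsResolving.apply_eq_self {T : Set X} (hT : IsResolving T)
    {f : X → X} (hf : ∀ a b, dist (f a) (f b) = dist a b) (hfix : ∀ t ∈ T, f t = t) (x : X) :
    f x = x :=
  hT _ _ fun t ht => by rw [← hf x t, hfix t ht]

end Resolving

theorem indicatorVec_mem_V {s : Finset (Fin 5)} (hs : #s = 3) : indicatorVec s ∈ V := by
  refine ⟨fun i => ?_, ?_⟩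
  · by_cases hi : i ∈ s <;> simp [indicatorVec, hi]
  · simp [indicatorVec, hs]

def vertex (s : Finset (Fin 5)) (hs : #s = 3) : V := ⟨indicatorVec s, indicatorVec_mem_V hs⟩

def vertexSet (x : V) : Finset (Fin 5) := {i | x.1 i = 1}

theorem indicatorVec_vertexSet (x : V) : indicatorVec (vertexSet x) = x := by
  ext i
  rcases x.2.1 i with h | h <;> simp [indicatorVec, vertexSet, h]

theorem vertexSet_injective : Function.Injective vertexSet := fun x y h =>
  Subtype.ext <| by rw [← indicatorVec_vertexSet x, ← indicatorVec_vertexSet y, h]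

theorem card_vertexSet (x : V) : #(vertexSet x) = 3 := by
  have h : ∑ i, indicatorVec (vertexSet x) i = 3 := by
    rw [indicatorVec_vertexSet]
    exact x.2.2
  simp only [indicatorVec, sum_ite_mem, univ_inter, sum_const, nsmul_eq_mul, mul_one] at h
  exact_mod_cast h

theorem vertexSet_vertex {s : Finset (Fin 5)} (hs : #s = 3) : vertexSet (vertex s hs) = s := by
  ext i
  by_cases hi : i ∈ s <;> simp [vertexSet, vertex, indicatorVec, hi]

theorem dist_eq_sqrt_card_symmDiff (x y : V) :
    dist x y = √(#(vertexSet x ∆ vertexSet y) : ℝ) := by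
  rw [Subtype.dist_eq, ← dist_indicatorVec, indicatorVec_vertexSet, indicatorVec_vertexSet]

theorem dist_eq_dist_iff {a b c d : V} :
    dist a b = dist c d ↔ #(vertexSet a ∆ vertexSet b) = #(vertexSet c ∆ vertexSet d) := by
  simp only [dist_eq_sqrt_card_symmDiff, Real.sqrt_inj (Nat.cast_nonneg _) (Nat.cast_nonneg _),
    Nat.cast_inj]

theorem piLpCongrLeft_mem_V_iff (σ : Equiv.Perm (Fin 5)) {x : EuclideanSpace ℝ (Fin 5)} :
    LinearIsometryEquiv.piLpCongrLeft 2 ℝ ℝ σ x ∈ V ↔ x ∈ V := by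
  simp only [V, Set.mem_ofPred_eq, LinearIsometryEquiv.piLpCongrLeft_apply,
    Equiv.piCongrLeft'_apply]
  rw [σ.symm.forall_congr_right (q := fun i => x i = 0 ∨ x i = 1),
    Equiv.sum_comp σ.symm (fun i => x i)]

def permV (σ : Equiv.Perm (Fin 5)) : Equiv.Perm V :=
  (LinearIsometryEquiv.piLpCongrLeft 2 ℝ ℝ σ).toEquiv.subtypeEquiv fun _ =>
    (piLpCongrLeft_mem_V_iff σ).symm

def permHom : Equiv.Perm (Fin 5) →* symmGroup where
  toFun σ := ⟨permV σ, fun a b => (LinearIsometryEquiv.piLpCongrLeft 2 ℝ ℝ σ).dist_map a b⟩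
  map_one' := rfl
  map_mul' _ _ := by ext; rfl

theorem vertexSet_permHom_apply (σ : Equiv.Perm (Fin 5)) (x : V) :
    vertexSet ((permHom σ : Equiv.Perm V) x) = (vertexSet x).map σ.toEmbedding := by
  ext i
  simp [vertexSet, permHom, permV, mem_map_equiv]

theorem permHom_injective : Function.Injective permHom := by
  refine (injective_iff_map_eq_one permHom).2 fun σ hσ => ?_
  refine Equiv.Perm.eq_one_of_forall_map_eq (k := 3) (by norm_num) (by simp) fun s hs => ?_
  rw [← vertexSet_vertex hs, ← vertexSet_permHom_apply, hσ]
  rfl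

theorem symmGroup_ext_of_isResolving {T : Set V} (hT : IsResolving T) {f g : symmGroup}
    (h : ∀ t ∈ T, (f : Equiv.Perm V) t = (g : Equiv.Perm V) t) : f = g := by
  have hfix : ∀ t ∈ T, ((g⁻¹ * f : symmGroup) : Equiv.Perm V) t = t := fun t ht => by
    simp [h t ht]
  refine Subtype.ext <| Equiv.ext fun x => ?_
  simpa using congrArg (g : Equiv.Perm V) (hT.apply_eq_self (g⁻¹ * f).2 hfix x)

theorem eq_of_card_symmDiff_eq_of_card_eq_three : ∀ s t : Finset (Fin 5), #s = 3 → #t = 3 →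
    #(s ∆ {0, 1, 2}) = #(t ∆ {0, 1, 2}) → #(s ∆ {0, 1, 3}) = #(t ∆ {0, 1, 3}) →
    #(s ∆ {0, 2, 3}) = #(t ∆ {0, 2, 3}) → s = t := by
  decide

/-- Ordered triples of 3-subsets of `Fin 5` contained in a common 4-set: `5 * 4 * 3 * 2` of them. -/
def cliqueTriangles : Finset (Finset (Fin 5) × Finset (Fin 5) × Finset (Fin 5)) :=
  {p ∈ univ.powersetCard 3 ×ˢ univ.powersetCard 3 ×ˢ univ.powersetCard 3 |
    #(p.1 ∆ p.2.1) = 2 ∧ #(p.1 ∆ p.2.2) = 2 ∧ #(p.2.1 ∆ p.2.2) = 2 ∧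
      ∃ d ∈ univ.powersetCard 3, #(p.1 ∆ d) = 2 ∧ #(p.2.1 ∆ d) = 2 ∧ #(p.2.2 ∆ d) = 2}

set_option maxRecDepth 10000 in
theorem card_cliqueTriangles : #cliqueTriangles = 5 ! := by
  decide

def vA : V := vertex {0, 1, 2} (by decide)
def vB : V := vertex {0, 1, 3} (by decide)
def vC : V := vertex {0, 2, 3} (by decide)
def vD : V := vertex {1, 2, 3} (by decide)

theorem isResolving_vA_vB_vC : IsResolving ({vA, vB, vC} : Set V) := by
  intro x y h
  simp only [Set.mem_insert_iff, Set.mem_singleton_iff, forall_eq_or_imp, forall_eq,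
    dist_eq_dist_iff, vA, vB, vC, vertexSet_vertex] at h
  exact vertexSet_injective <| eq_of_card_symmDiff_eq_of_card_eq_three _ _
    (card_vertexSet x) (card_vertexSet y) h.1 h.2.1 h.2.2

theorem card_symmDiff_vertexSet_apply (f : symmGroup) (a b : V) :
    #(vertexSet ((f : Equiv.Perm V) a) ∆ vertexSet ((f : Equiv.Perm V) b)) =
      #(vertexSet a ∆ vertexSet b) :=
  dist_eq_dist_iff.1 (f.2 a b)

def frameImage (f : symmGroup) : Finset (Fin 5) × Finset (Fin 5) × Finset (Fin 5) :=
  (vertexSet ((f : Equiv.Perm V) vA), vertexSet ((f : Equiv.Perm V) vB),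
    vertexSet ((f : Equiv.Perm V) vC))

theorem frameImage_mem_cliqueTriangles (f : symmGroup) : frameImage f ∈ cliqueTriangles := by
  simp only [cliqueTriangles, frameImage, mem_filter, mem_product, mem_powersetCard, subset_univ,
    true_and, card_vertexSet, card_symmDiff_vertexSet_apply]
  refine ⟨?_, ?_, ?_, _, card_vertexSet ((f : Equiv.Perm V) vD), ?_⟩ <;>
    simp only [card_symmDiff_vertexSet_apply, vA, vB, vC, vD, vertexSet_vertex] <;> decide

theorem frameImage_injective : Function.Injective frameImage := fun f g h => by
  simp only [frameImage, Prod.mk.injEq] at h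
  refine symmGroup_ext_of_isResolving isResolving_vA_vB_vC ?_
  simp only [Set.mem_insert_iff, Set.mem_singleton_iff, forall_eq_or_imp, forall_eq]
  exact ⟨vertexSet_injective h.1, vertexSet_injective h.2.1, vertexSet_injective h.2.2⟩

theorem natCard_symmGroup_le : Nat.card symmGroup ≤ Nat.card (Equiv.Perm (Fin 5)) := by
  rw [Nat.card_perm, Nat.card_fin, ← card_cliqueTriangles, ← Nat.card_eq_finsetCard]
  exact Nat.card_le_card_of_injective (fun f => ⟨frameImage f, frameImage_mem_cliqueTriangles f⟩)
    fun f g h => frameImage_injective (congrArg Subtype.val h)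

/-- The symmetry group of the rectified 5-cell, i.e. the isometry group of
its 10-point vertex set `V`, is the symmetric group `𝔖₅`. -/
theorem symmGroup_iso_S5 : Nonempty (symmGroup ≃* Equiv.Perm (Fin 5)) := by
  have : Finite V := Finite.of_injective _ vertexSet_injective
  have hbij : Function.Bijective permHom :=
    permHom_injective.bijective_of_nat_card_le natCard_symmGroup_le
  exact ⟨(MulEquiv.ofBijective permHom hbij).symm⟩
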